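/- arXiv:1208.0911 — 3 statements merged into one kernel-verified Lean document; each statement's English description precedes it below -/
import Mathlib

section
/- If f ∈ F_α is not almost everywhere equal to 0, then for every p ∈ (0,+∞) one has ∫_ℝ |Φ_f(θ)|^p dθ = ∫_ℝ exp(−p ∫_ℝ |θ f(x)|^{α(x)} dx) dθ < ∞; in particular Φ_f belongs to L^p(ℝ) for every p ∈ (0,+∞). -/
/-!
Since `a ≤ α ≤ b`, the inner integral `∫ |θ f|^α` is finite for every `θ` and at least
`(|θ|^a - 1) C` with `C = ∫ |f|^α`, which is positive because `f` is not a.e. zero. Hence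
`|Φ_f(θ)|^p = exp (-p ∫ |θ f|^α) ≤ exp (p C) exp (-p C |θ|^a)`, an integrable function.
-/

open MeasureTheory

noncomputable def Phi (α f : ℝ → ℝ) (θ : ℝ) : ℝ :=
  Real.exp (-∫ x : ℝ, |θ * f x| ^ α x)

open Real Set

-- The Bochner integral of a non-integrable function is `0`, so the Gamma-function value of the
-- integral proves integrability.
theorem integrable_exp_neg_mul_abs_rpow {b p : ℝ} (hb : 0 < b) (hp : 0 < p) :
    Integrable fun x : ℝ => exp (-b * |x| ^ p) := by
  refine Integrable.of_integral_ne_zero ?_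
  rw [integral_comp_abs (f := fun x => exp (-b * x ^ p)), integral_exp_neg_mul_rpow hp hb]
  have := Gamma_pos_of_pos (by positivity : 0 < 1 / p + 1)
  positivity

theorem Real.rpow_le_max_one_rpow {t s b : ℝ} (ht : 0 ≤ t) (hs : 0 ≤ s) (hsb : s ≤ b) :
    t ^ s ≤ max 1 t ^ b :=
  calc t ^ s ≤ max 1 t ^ s := rpow_le_rpow ht (le_max_right 1 t) hs
    _ ≤ max 1 t ^ b := rpow_le_rpow_of_exponent_le (le_max_left 1 t) hsb

theorem Real.rpow_sub_one_le_rpow {t a s : ℝ} (ht : 0 ≤ t) (ha : 0 ≤ a) (has : a ≤ s) :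
    t ^ a - 1 ≤ t ^ s := by
  rcases le_total t 1 with ht1 | ht1
  · linarith [rpow_le_one ht ht1 ha, rpow_nonneg ht s]
  · linarith [rpow_le_rpow_of_exponent_le ht1 has]

section

variable {α f : ℝ → ℝ}

theorem abs_mul_rpow_eq (θ x : ℝ) : |θ * f x| ^ α x = |θ| ^ α x * |f x| ^ α x := by
  rw [abs_mul, mul_rpow (abs_nonneg θ) (abs_nonneg (f x))]

theorem integral_abs_rpow_pos (hfi : Integrable fun x => |f x| ^ α x)
    (hf0 : ¬ f =ᵐ[volume] 0) : 0 < ∫ x, |f x| ^ α x := by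
  refine (integral_pos_iff_support_of_nonneg (fun x => rpow_nonneg (abs_nonneg _) _) hfi).2 ?_
  refine pos_iff_ne_zero.2 fun h => hf0 (ae_iff.2 (measure_mono_null (fun x hx => ?_) h))
  exact (rpow_pos_of_pos (abs_pos.2 hx) _).ne'

theorem integrable_abs_const_mul_rpow {b : ℝ} (hαm : Measurable α) (hα0 : ∀ x, 0 ≤ α x)
    (hαb : ∀ x, α x ≤ b) (hfi : Integrable fun x => |f x| ^ α x) (θ : ℝ) :
    Integrable fun x => |θ * f x| ^ α x := by
  simp_rw [abs_mul_rpow_eq]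
  refine hfi.bdd_mul (c := max 1 |θ| ^ b) (measurable_const.pow hαm).aestronglyMeasurable
    (ae_of_all _ fun x => ?_)
  rw [norm_of_nonneg (rpow_nonneg (abs_nonneg θ) _)]
  exact rpow_le_max_one_rpow (abs_nonneg θ) (hα0 x) (hαb x)

theorem rpow_sub_one_mul_integral_le {a : ℝ} (ha : 0 ≤ a) (hαa : ∀ x, a ≤ α x)
    (hfi : Integrable fun x => |f x| ^ α x) {θ : ℝ}
    (hθ : Integrable fun x => |θ * f x| ^ α x) :
    (|θ| ^ a - 1) * ∫ x, |f x| ^ α x ≤ ∫ x, |θ * f x| ^ α x := by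
  rw [← integral_const_mul]
  refine integral_mono (hfi.const_mul _) hθ fun x => ?_
  rw [abs_mul_rpow_eq]
  exact mul_le_mul_of_nonneg_right (rpow_sub_one_le_rpow (abs_nonneg θ) ha (hαa x))
    (rpow_nonneg (abs_nonneg _) _)

theorem measurable_integral_abs_mul_rpow (hαm : Measurable α) (hfm : Measurable f) :
    Measurable fun θ => ∫ x, |θ * f x| ^ α x :=
  ((measurable_fst.mul (hfm.comp measurable_snd)).abs.pow
    (hαm.comp measurable_snd)).stronglyMeasurable.integral_prod_right'.measurable

theorem measurable_Phi (hαm : Measurable α) (hfm : Measurable f) : Measurable (Phi α f) :=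
  (measurable_integral_abs_mul_rpow hαm hfm).neg.exp

theorem abs_Phi_rpow (p θ : ℝ) :
    |Phi α f θ| ^ p = exp (-(p * ∫ x, |θ * f x| ^ α x)) := by
  rw [Phi, abs_of_pos (exp_pos _), ← exp_mul]
  ring_nf

theorem integrable_exp_neg_mul_integral_abs_mul_rpow {a b p : ℝ} (ha : 0 < a) (hp : 0 < p)
    (hαm : Measurable α) (hα : ∀ x, α x ∈ Icc a b) (hfm : Measurable f)
    (hfi : Integrable fun x => |f x| ^ α x) (hf0 : ¬ f =ᵐ[volume] 0) :
    Integrable fun θ => exp (-(p * ∫ x, |θ * f x| ^ α x)) := by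
  set C := ∫ x, |f x| ^ α x
  have hC : 0 < C := integral_abs_rpow_pos hfi hf0
  have hα0 : ∀ x, 0 ≤ α x := fun x => ha.le.trans (hα x).1
  refine ((integrable_exp_neg_mul_abs_rpow (mul_pos hp hC) ha).const_mul (exp (p * C))).mono'
    ((measurable_integral_abs_mul_rpow hαm hfm).const_mul p).neg.exp.aestronglyMeasurable
    (ae_of_all _ fun θ => ?_)
  have hlow := rpow_sub_one_mul_integral_le ha.le (fun x => (hα x).1) hfi
    (integrable_abs_const_mul_rpow hαm hα0 (fun x => (hα x).2) hfi θ)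
  rw [norm_of_nonneg (exp_pos _).le, ← exp_add, exp_le_exp]
  nlinarith

end

theorem Phi_memLp_general
    (a b : ℝ) (ha : 0 < a)
    (α : ℝ → ℝ) (hαm : Measurable α) (hα : ∀ x, α x ∈ Set.Icc a b)
    (f : ℝ → ℝ) (hfm : Measurable f) (hfi : Integrable (fun x => |f x| ^ α x))
    (hf0 : ¬ (f =ᵐ[volume] 0))
    (p : ℝ) (hp : 0 < p) :
    Integrable (fun θ : ℝ => |Phi α f θ| ^ p) ∧
    (∫ θ : ℝ, |Phi α f θ| ^ p) =
      (∫ θ : ℝ, Real.exp (-(p * ∫ x : ℝ, |θ * f x| ^ α x))) ∧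
    MemLp (Phi α f) (ENNReal.ofReal p) volume := by
  have hint : Integrable fun θ => |Phi α f θ| ^ p := by
    simpa only [abs_Phi_rpow] using
      integrable_exp_neg_mul_integral_abs_mul_rpow ha hp hαm hα hfm hfi hf0
  refine ⟨hint, by simp only [abs_Phi_rpow], ?_⟩
  rw [← integrable_norm_rpow_iff (measurable_Phi hαm hfm).aestronglyMeasurable
    (by simpa using hp) ENNReal.ofReal_ne_top, ENNReal.toReal_ofReal hp.le]
  simpa only [norm_eq_abs] using hint

/-- if f ∈ F_α is not a.e. 0, then for every p ∈ (0,∞),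
∫ |Φ_f(θ)|^p dθ = ∫ exp(−p ∫ |θ f(x)|^{α(x)} dx) dθ < ∞; in particular Φ_f ∈ L^p(ℝ). -/
theorem Phi_memLp
    (a b : ℝ) (ha : 0 < a) (hab : a < b) (hb : b < 2)
    (α : ℝ → ℝ) (hαm : Measurable α) (hα : ∀ x, α x ∈ Set.Icc a b)
    (f : ℝ → ℝ) (hfm : Measurable f) (hfi : Integrable (fun x => |f x| ^ α x))
    (hf0 : ¬ (f =ᵐ[volume] 0))
    (p : ℝ) (hp : 0 < p) :
    Integrable (fun θ : ℝ => |Phi α f θ| ^ p) ∧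
    (∫ θ : ℝ, |Phi α f θ| ^ p) =
      (∫ θ : ℝ, Real.exp (-(p * ∫ x : ℝ, |θ * f x| ^ α x))) ∧
    MemLp (Phi α f) (ENNReal.ofReal p) volume :=
  Phi_memLp_general a b ha α hαm hα f hfm hfi hf0 p hp
end

section
/- Let f ∈ F_α be not almost everywhere equal to 0 and let μ_f be a probability measure on ℝ whose characteristic function is Φ_f. Then for every real number λ ∈ [q, +∞) one has η_f(q^{j₀(λ,q)+1}) ≤ μ_f({x ∈ ℝ : |x| > λ}) ≤ η_f(q^{j₀(λ,q)−1}). -/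
open MeasureTheory

/-- η_f(ξ) = ∫_ℝ φ(θ)(1 − exp(−∫_ℝ |ξ⁻¹ θ f(x)|^{α(x)} dx)) dθ. -/
noncomputable def etaF (α f φ : ℝ → ℝ) (ξ : ℝ) : ℝ :=
  ∫ θ : ℝ, φ θ * (1 - Real.exp (-∫ x : ℝ, |ξ⁻¹ * θ * f x| ^ α x))

/-- j₀(λ,q) = ⌊log λ / log q⌋. -/
noncomputable def j0 (lam q : ℝ) : ℤ :=
  ⌊Real.log lam / Real.log q⌋

/-!
Writing `η_f(ξ) = ∫ φ(θ) (1 - Φ_f(θ/ξ)) dθ` and using `∫ φ = φ̂(0) = 1`, Fubini (Parseval for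
the characteristic function, together with evenness of `Φ_f`) gives
`η_f(ξ) = ∫ (1 - φ̂(x/ξ)) dμ_f(x)`. Since `0 ≤ φ̂ ≤ 1`, `φ̂ = 1` on `[-1, 1]` and `φ̂ = 0` for
`|x| ≥ (1+q)/2`, the integrand lies between the indicators of `{|x| ≥ (1+q)ξ/2}` and
`{|x| > ξ}`. Taking `ξ = q^{j₀+1} > λ` gives the lower bound, and `ξ = q^{j₀-1}`, for which
`(1+q)ξ/2 ≤ q^{j₀} ≤ λ`, the upper bound.
-/

noncomputable def probFourier (φ : ℝ → ℂ) : ℝ → ℂ :=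
  VectorFourier.fourierIntegral Real.probChar (volume : Measure ℝ) (innerₗ ℝ) φ

lemma probFourier_apply (φ : ℝ → ℂ) (x : ℝ) :
    probFourier φ x = ∫ θ : ℝ, Complex.exp (-(Complex.I * x * θ)) * φ θ := by
  simp only [probFourier, VectorFourier.fourierIntegral_probChar, innerₗ_apply_apply, smul_eq_mul,
    RCLike.inner_apply, conj_trivial, Complex.ofReal_mul]
  congr 1 with θ
  ring_nf

lemma continuous_probFourier {φ : ℝ → ℂ} (hφ : Integrable φ) : Continuous (probFourier φ) :=
  VectorFourier.fourierIntegral_continuous Real.continuous_probChar continuous_inner hφ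

lemma norm_probFourier_le (φ : ℝ → ℂ) (x : ℝ) : ‖probFourier φ x‖ ≤ ∫ θ, ‖φ θ‖ :=
  VectorFourier.norm_fourierIntegral_le_integral_norm _ _ _ _ _

lemma probFourier_zero (φ : ℝ → ℂ) : probFourier φ 0 = ∫ θ, φ θ := by
  simp [probFourier_apply]

lemma continuous_of_ofReal_eq_probFourier {φ : ℝ → ℂ} (hφ : Integrable φ) {g : ℝ → ℝ}
    (hg : ∀ x, (g x : ℂ) = probFourier φ x) : Continuous g := by
  have : g = fun x => (probFourier φ x).re := funext fun x => by rw [← hg, Complex.ofReal_re]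
  exact this ▸ Complex.continuous_re.comp (continuous_probFourier hφ)

lemma integral_mul_charFun_neg {μ : Measure ℝ} [IsFiniteMeasure μ] {φ : ℝ → ℂ}
    (hφ : Integrable φ) :
    ∫ θ, φ θ * charFun μ (-θ) = ∫ x, probFourier φ x ∂μ := by
  have := VectorFourier.integral_fourierIntegral_smul_eq_flip (μ := volume) (ν := μ)
    (L := innerₗ ℝ) (g := fun _ => (1 : ℂ)) Real.continuous_probChar continuous_inner hφ
    (integrable_const 1)
  simp only [smul_eq_mul, mul_one, flip_innerₗ] at this
  simp only [probFourier, this, charFun_eq_fourierIntegral, neg_neg]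
  rfl

lemma integral_mul_charFun_neg_mul {μ : Measure ℝ} [IsFiniteMeasure μ] {φ : ℝ → ℂ}
    (hφ : Integrable φ) (c : ℝ) :
    ∫ θ, φ θ * charFun μ (-(c * θ)) = ∫ x, probFourier φ (c * x) ∂μ := by
  calc ∫ θ, φ θ * charFun μ (-(c * θ)) = ∫ θ, φ θ * charFun (μ.map (c • ·)) (-θ) := by
        simp_rw [charFun_map_smul, smul_neg, smul_eq_mul]
    _ = ∫ x, probFourier φ x ∂(μ.map (c • ·)) := integral_mul_charFun_neg hφ
    _ = ∫ x, probFourier φ (c * x) ∂μ :=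
        integral_map (measurable_const_smul c).aemeasurable
          (continuous_probFourier hφ).aestronglyMeasurable

lemma Phi_neg (α f : ℝ → ℝ) (θ : ℝ) : Phi α f (-θ) = Phi α f θ := by
  simp only [Phi, neg_mul, abs_neg]

lemma etaF_eq_integral_one_sub {μ : Measure ℝ} [IsProbabilityMeasure μ] {α f φ φhat : ℝ → ℝ}
    (hμ : ∀ θ : ℝ, charFun μ θ = Phi α f θ) (hφ : Integrable φ)
    (hφhat : ∀ x, (φhat x : ℂ) = probFourier (fun θ => φ θ) x) (hφhat_zero : φhat 0 = 1)
    (ξ : ℝ) :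
    etaF α f φ ξ = ∫ x, (1 - φhat (ξ⁻¹ * x)) ∂μ := by
  have hPhi : Phi α f = fun θ => (charFun μ θ).re :=
    funext fun θ => by rw [hμ, Complex.ofReal_re]
  have hφ_total : ∫ θ, φ θ = 1 := by
    have := hφhat 0
    rw [hφhat_zero, probFourier_zero, integral_complex_ofReal] at this
    exact_mod_cast this.symm
  have hφPhi : Integrable fun θ => φ θ * Phi α f (ξ⁻¹ * θ) := by
    refine hφ.mul_bdd (c := 1) ?_ (ae_of_all _ fun θ => ?_)
    · rw [hPhi]
      exact (Complex.measurable_re.comp (measurable_charFun.comp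
        (measurable_const_mul ξ⁻¹))).aestronglyMeasurable
    · rw [hPhi, Real.norm_eq_abs]
      exact (Complex.abs_re_le_norm _).trans (norm_charFun_le_one _)
  have hφhat_int : Integrable (fun x => φhat (ξ⁻¹ * x)) μ := by
    refine .of_bound ((continuous_of_ofReal_eq_probFourier hφ.ofReal hφhat).comp
      (continuous_const_mul ξ⁻¹)).aestronglyMeasurable (∫ θ, ‖(φ θ : ℂ)‖)
      (ae_of_all _ fun x => ?_)
    rw [← Complex.norm_real, hφhat]
    exact norm_probFourier_le _ _
  have hParseval : ∫ θ, φ θ * Phi α f (ξ⁻¹ * θ) = ∫ x, φhat (ξ⁻¹ * x) ∂μ := by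
    apply Complex.ofReal_injective
    rw [← integral_complex_ofReal, ← integral_complex_ofReal]
    push_cast
    simp_rw [← Phi_neg α f (ξ⁻¹ * _), ← hμ, hφhat]
    exact integral_mul_charFun_neg_mul hφ.ofReal ξ⁻¹
  calc etaF α f φ ξ = ∫ θ, (φ θ - φ θ * Phi α f (ξ⁻¹ * θ)) := by
        simp only [etaF, Phi, mul_sub, mul_one]
    _ = 1 - ∫ x, φhat (ξ⁻¹ * x) ∂μ := by rw [integral_sub hφ hφPhi, hφ_total, hParseval]
    _ = ∫ x, (1 - φhat (ξ⁻¹ * x)) ∂μ := by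
        rw [integral_sub (integrable_const 1) hφhat_int, integral_const, probReal_univ, one_smul]

section TailSandwich

variable {μ : Measure ℝ} [IsFiniteMeasure μ] {g : ℝ → ℝ} {ξ lam : ℝ}

lemma integral_one_sub_comp_le_measureReal (hg : ∀ y, g y ∈ Set.Icc 0 1)
    (hg_one : ∀ y, |y| ≤ 1 → g y = 1) (hξ : 0 < ξ) (hlam : lam ≤ ξ) :
    ∫ x, (1 - g (ξ⁻¹ * x)) ∂μ ≤ μ.real {x | lam < |x|} := by
  have hs : MeasurableSet {x : ℝ | lam < |x|} := measurableSet_lt measurable_const measurable_abs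
  rw [← integral_indicator_one hs]
  refine integral_mono_of_nonneg (ae_of_all _ fun x => sub_nonneg.2 (hg _).2)
    ((integrable_const 1).indicator hs) (ae_of_all _ fun x => ?_)
  change 1 - g (ξ⁻¹ * x) ≤ _
  by_cases hx : x ∈ {x : ℝ | lam < |x|}
  · rw [Set.indicator_of_mem hx, Pi.one_apply]
    linarith [(hg (ξ⁻¹ * x)).1]
  · have : |ξ⁻¹ * x| ≤ 1 := by
      rw [abs_mul, abs_inv, abs_of_pos hξ, inv_mul_le_one₀ hξ]
      exact (not_lt.1 hx).trans hlam
    rw [Set.indicator_of_notMem hx, hg_one _ this, sub_self]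

lemma measureReal_le_integral_one_sub_comp (hg_meas : Measurable g)
    (hg : ∀ y, g y ∈ Set.Icc 0 1) {r : ℝ} (hg_zero : ∀ y, r ≤ |y| → g y = 0) (hξ : 0 < ξ)
    (hlam : r * ξ ≤ lam) :
    μ.real {x | lam < |x|} ≤ ∫ x, (1 - g (ξ⁻¹ * x)) ∂μ := by
  have hs : MeasurableSet {x : ℝ | lam < |x|} := measurableSet_lt measurable_const measurable_abs
  rw [← integral_indicator_one hs]
  have hint : Integrable (fun x => 1 - g (ξ⁻¹ * x)) μ :=
    (integrable_const 1).sub <| .of_bound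
      (hg_meas.comp (measurable_const_mul ξ⁻¹)).aestronglyMeasurable 1
      (ae_of_all _ fun x => abs_le.2 ⟨by linarith [(hg (ξ⁻¹ * x)).1], (hg _).2⟩)
  refine integral_mono ((integrable_const 1).indicator hs) hint fun x => ?_
  by_cases hx : x ∈ {x : ℝ | lam < |x|}
  · have : r ≤ |ξ⁻¹ * x| := by
      rw [abs_mul, abs_inv, abs_of_pos hξ, inv_mul_eq_div, le_div_iff₀ hξ]
      exact hlam.trans (le_of_lt hx)
    rw [Set.indicator_of_mem hx, Pi.one_apply, hg_zero _ this, sub_zero]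
  · rw [Set.indicator_of_notMem hx, sub_nonneg]
    exact (hg _).2

end TailSandwich

lemma zpow_j0_le {lam q : ℝ} (hq : 1 < q) (hlam : 0 < lam) : q ^ j0 lam q ≤ lam := by
  rw [← Real.rpow_intCast, ← Real.le_logb_iff_rpow_le hq hlam]
  exact Int.floor_le _

lemma lt_zpow_j0_add_one {lam q : ℝ} (hq : 1 < q) (hlam : 0 < lam) :
    lam < q ^ (j0 lam q + 1) := by
  rw [← Real.rpow_intCast, ← Real.logb_lt_iff_lt_rpow hq hlam, Int.cast_add, Int.cast_one]
  exact Int.lt_floor_add_one _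

theorem tail_bounds_by_eta_general
    (α : ℝ → ℝ)
    (f : ℝ → ℝ)
    (μ : Measure ℝ) (hμprob : IsProbabilityMeasure μ)
    (hμchar : ∀ θ : ℝ,
      (∫ x : ℝ, Complex.exp (Complex.I * θ * x) ∂μ) = (Phi α f θ : ℂ))
    (q : ℝ) (hq : 1 < q)
    (φ : ℝ → ℝ) (hφint : Integrable φ)
    (φhat : ℝ → ℝ)
    (hφhat : ∀ x : ℝ, (φhat x : ℂ) = ∫ θ : ℝ, Complex.exp (-(Complex.I * x * θ)) * (φ θ : ℂ))
    (hφhat01 : ∀ x, φhat x ∈ Set.Icc (0 : ℝ) 1)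
    (hφhat1 : ∀ x : ℝ, |x| ≤ 1 → φhat x = 1)
    (hφhat0 : ∀ x : ℝ, (1 + q) / 2 ≤ |x| → φhat x = 0) :
    ∀ lam : ℝ, q ≤ lam →
      etaF α f φ (q ^ (j0 lam q + 1)) ≤ (μ {x : ℝ | lam < |x|}).toReal ∧
      (μ {x : ℝ | lam < |x|}).toReal ≤ etaF α f φ (q ^ (j0 lam q - 1)) := by
  intro lam hlam
  have hq0 : 0 < q := by linarith
  have hlam0 : 0 < lam := by linarith
  have hμ (θ : ℝ) : charFun μ θ = Phi α f θ := by
    rw [charFun_apply_real, ← hμchar]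
    simp only [mul_comm, mul_left_comm]
  have hφhat' (x : ℝ) : (φhat x : ℂ) = probFourier (fun θ => φ θ) x := by
    rw [hφhat, probFourier_apply]
  have heta := etaF_eq_integral_one_sub hμ hφint hφhat' (hφhat1 0 (by simp))
  have hlam_ge : (1 + q) / 2 * q ^ (j0 lam q - 1) ≤ lam :=
    calc (1 + q) / 2 * q ^ (j0 lam q - 1) ≤ q * q ^ (j0 lam q - 1) := by gcongr; linarith
      _ = q ^ j0 lam q := by rw [mul_comm, ← zpow_add_one₀ hq0.ne', sub_add_cancel]
      _ ≤ lam := zpow_j0_le hq hlam0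
  refine ⟨?_, ?_⟩
  · rw [heta]
    exact integral_one_sub_comp_le_measureReal hφhat01 hφhat1 (zpow_pos hq0 _)
      (lt_zpow_j0_add_one hq hlam0).le
  · rw [heta]
    exact measureReal_le_integral_one_sub_comp
      (continuous_of_ofReal_eq_probFourier hφint.ofReal hφhat').measurable hφhat01 hφhat0
      (zpow_pos hq0 _) hlam_ge

/-- for every λ ≥ q,
η_f(q^{j₀(λ,q)+1}) ≤ μ_f(|x| > λ) ≤ η_f(q^{j₀(λ,q)−1}). -/
theorem tail_bounds_by_eta
    (a b : ℝ) (ha : 0 < a) (hab : a < b) (hb : b < 2)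
    (α : ℝ → ℝ) (hαm : Measurable α) (hα : ∀ x, α x ∈ Set.Icc a b)
    (f : ℝ → ℝ) (hfm : Measurable f) (hfi : Integrable (fun x => |f x| ^ α x))
    (hf0 : ¬ (f =ᵐ[volume] 0))
    (μ : Measure ℝ) (hμprob : IsProbabilityMeasure μ)
    (hμchar : ∀ θ : ℝ,
      (∫ x : ℝ, Complex.exp (Complex.I * θ * x) ∂μ) = (Phi α f θ : ℂ))
    (q : ℝ) (hq : 1 < q)
    (φ : ℝ → ℝ) (hφeven : ∀ θ, φ (-θ) = φ θ) (hφint : Integrable φ)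
    (hφmom : ∀ γ ∈ Set.Ico (0 : ℝ) 4, Integrable (fun θ : ℝ => (1 + |θ|) ^ γ * |φ θ|))
    (φhat : ℝ → ℝ)
    (hφhat : ∀ x : ℝ, (φhat x : ℂ) = ∫ θ : ℝ, Complex.exp (-(Complex.I * x * θ)) * (φ θ : ℂ))
    (hφhat01 : ∀ x, φhat x ∈ Set.Icc (0 : ℝ) 1)
    (hφhat1 : ∀ x : ℝ, |x| ≤ 1 → φhat x = 1)
    (hφhat0 : ∀ x : ℝ, (1 + q) / 2 ≤ |x| → φhat x = 0) :
    ∀ lam : ℝ, q ≤ lam →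
      etaF α f φ (q ^ (j0 lam q + 1)) ≤ (μ {x : ℝ | lam < |x|}).toReal ∧
      (μ {x : ℝ | lam < |x|}).toReal ≤ etaF α f φ (q ^ (j0 lam q - 1)) :=
  tail_bounds_by_eta_general α f μ hμprob hμchar q hq φ hφint φhat hφhat hφhat01 hφhat1 hφhat0
end

section
/- Set c₁ = ∫_ℝ (1+|θ|)^{2b} |φ(θ)| dθ and c₂ = max_{γ ∈ [a,b]} C(γ)^{−1}. Then for every f ∈ F_α and every real number ξ ≥ 1 one has ρ_f(ξ) ≤ c₁ c₂² (T_f(ξ))². -/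
/-! For `u ≥ 0` one has `0 ≤ u - 1 + e^{-u} ≤ u²`, so the `θ`-integrand of `ρ_f(ξ)` is at most
`|φ(θ)| u(θ)²` with `u(θ) = ∫ |ξ⁻¹ θ f|^α`. Pointwise, `|θ|^{α(x)} ≤ (1 + |θ|)^b` and
`1 ≤ c₂ C(α(x))`, hence `u(θ) ≤ (1 + |θ|)^b c₂ T_f(ξ)`, and squaring gives the weight
`(1 + |θ|)^{2b}`. On the side of `C`, the bounds `t ≤ sin (π t / 2) ≤ π t / 2` on `[0, 1]` squeeze
`C(γ)` between `2 / (π Γ(2 - γ))` and `1 / Γ(2 - γ)`; by continuity of `Γ` on `[2 - b, 2 - a]`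
this makes `c₂` finite and the integrand of `T_f(ξ)` integrable. -/

open MeasureTheory

/-- C(γ) = 2/π if γ = 1 and (1−γ)/(Γ(2−γ)cos(πγ/2)) otherwise. -/
noncomputable def Cfun (γ : ℝ) : ℝ :=
  if γ = 1 then 2 / Real.pi
  else (1 - γ) / (Real.Gamma (2 - γ) * Real.cos (Real.pi * γ / 2))

/-- T_f(λ) = ∫_ℝ |λ⁻¹ f(x)|^{α(x)} C(α(x)) dx. -/
noncomputable def Tf (α f : ℝ → ℝ) (lam : ℝ) : ℝ :=
  ∫ x : ℝ, |lam⁻¹ * f x| ^ α x * Cfun (α x)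

/-- ρ_f(ξ) = ∫_ℝ |φ(θ)| · |∫ |ξ⁻¹θ f(x)|^{α(x)} dx − 1 + exp(−∫ |ξ⁻¹θ f(x)|^{α(x)} dx)| dθ. -/
noncomputable def rhoF (α f φ : ℝ → ℝ) (ξ : ℝ) : ℝ :=
  ∫ θ : ℝ, |φ θ| *
    |(∫ x : ℝ, |ξ⁻¹ * θ * f x| ^ α x) - 1 +
      Real.exp (-∫ x : ℝ, |ξ⁻¹ * θ * f x| ^ α x)|

open Real Set

lemma abs_sub_one_add_exp_neg_le_sq {u : ℝ} (hu : 0 ≤ u) : |u - 1 + exp (-u)| ≤ u ^ 2 := by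
  rcases le_total u 1 with h | h
  · have := abs_exp_sub_one_sub_id_le (x := -u) (by rwa [abs_neg, abs_of_nonneg hu])
    rwa [neg_sq, sub_neg_eq_add, sub_add_comm] at this
  · have h0 : 0 ≤ u - 1 + exp (-u) := by linarith [add_one_le_exp (-u)]
    have h1 : exp (-u) ≤ 1 := exp_le_one_iff.mpr (by linarith)
    rw [abs_of_nonneg h0]
    nlinarith

@[fun_prop]
lemma Real.measurable_Gamma : Measurable Gamma := by
  refine measurable_of_countable_not_continuousAt
    ((countable_range fun n : ℕ => -(n : ℝ)).mono fun s hs => ?_)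
  by_contra h
  exact hs (differentiableAt_Gamma fun m hm => h ⟨m, hm.symm⟩).continuousAt

lemma measurable_Cfun : Measurable Cfun :=
  Measurable.ite (measurableSet_singleton 1) measurable_const (by fun_prop)

lemma Cfun_eq_of_ne_one {γ : ℝ} (h1 : γ ≠ 1) :
    Cfun γ = |1 - γ| / (Gamma (2 - γ) * sin (π * |1 - γ| / 2)) := by
  have hcos : cos (π * γ / 2) = sin (π * (1 - γ) / 2) := by
    rw [← cos_pi_div_two_sub]
    congr 1; ring
  rw [Cfun, if_neg h1, hcos]
  rcases lt_or_gt_of_ne h1 with h | h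
  · rw [abs_of_pos (by linarith : (0:ℝ) < 1 - γ)]
  · rw [abs_of_neg (by linarith : (1:ℝ) - γ < 0),
      show π * -(1 - γ) / 2 = -(π * (1 - γ) / 2) by ring, sin_neg]
    ring

lemma Cfun_mem_Icc {γ : ℝ} (h0 : 0 < γ) (h2 : γ < 2) :
    Cfun γ ∈ Icc (2 / (π * Gamma (2 - γ))) (Gamma (2 - γ))⁻¹ := by
  have hG : 0 < Gamma (2 - γ) := Gamma_pos_of_pos (by linarith)
  by_cases h1 : γ = 1
  · subst h1
    rw [Cfun, if_pos rfl, show (2 : ℝ) - 1 = 1 by norm_num, Gamma_one, mul_one, inv_one]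
    exact ⟨le_rfl, (div_le_one pi_pos).mpr two_le_pi⟩
  set t := |1 - γ|
  have ht0 : 0 < t := abs_pos.mpr (sub_ne_zero.mpr (Ne.symm h1))
  have ht1 : t ≤ 1 := abs_le.mpr ⟨by linarith, by linarith⟩
  have hsin_le : sin (π * t / 2) ≤ π * t / 2 := sin_le (by positivity)
  have hle_sin : t ≤ sin (π * t / 2) := by
    have := mul_le_sin (x := π * t / 2) (by positivity) (by nlinarith [pi_pos])
    rwa [show 2 / π * (π * t / 2) = t by field_simp] at this
  have hsin : 0 < sin (π * t / 2) := ht0.trans_le hle_sin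
  rw [Cfun_eq_of_ne_one h1]
  constructor
  · rw [div_le_div_iff₀ (by positivity) (by positivity)]
    nlinarith
  · rw [div_le_iff₀ (by positivity), inv_mul_cancel_left₀ hG.ne']
    exact hle_sin

lemma two_div_pi_mul_Gamma_pos {γ : ℝ} (h2 : γ < 2) : 0 < 2 / (π * Gamma (2 - γ)) :=
  div_pos two_pos (mul_pos pi_pos (Gamma_pos_of_pos (by linarith)))

lemma Cfun_pos {γ : ℝ} (h0 : 0 < γ) (h2 : γ < 2) : 0 < Cfun γ :=
  (two_div_pi_mul_Gamma_pos h2).trans_le (Cfun_mem_Icc h0 h2).1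

lemma inv_Cfun_le {γ : ℝ} (h0 : 0 < γ) (h2 : γ < 2) :
    (Cfun γ)⁻¹ ≤ π * Gamma (2 - γ) / 2 := by
  simpa only [inv_div] using inv_anti₀ (two_div_pi_mul_Gamma_pos h2) (Cfun_mem_Icc h0 h2).1

lemma continuousOn_Gamma_two_sub : ContinuousOn (fun γ => Gamma (2 - γ)) (Iio 2) := by
  intro γ hγ
  have hpos : 0 < 2 - γ := sub_pos.mpr hγ
  have hΓ : ContinuousAt Gamma (2 - γ) :=
    (differentiableAt_Gamma fun m =>
      ((neg_nonpos.mpr (Nat.cast_nonneg m)).trans_lt hpos).ne').continuousAt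
  exact (hΓ.comp (continuous_sub_left 2).continuousAt).continuousWithinAt

lemma bddAbove_Cfun_image {a b : ℝ} (ha : 0 < a) (hb : b < 2) : BddAbove (Cfun '' Icc a b) := by
  have hsub : Icc a b ⊆ Iio 2 := fun γ hγ => hγ.2.trans_lt hb
  obtain ⟨M, hM⟩ := isCompact_Icc.bddAbove_image
    ((continuousOn_Gamma_two_sub.mono hsub).inv₀ fun γ hγ =>
      (Gamma_pos_of_pos (sub_pos.mpr (hsub hγ))).ne')
  refine ⟨M, ?_⟩
  rintro _ ⟨γ, hγ, rfl⟩
  exact (Cfun_mem_Icc (ha.trans_le hγ.1) (hsub hγ)).2.trans (hM ⟨γ, hγ, rfl⟩)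

lemma bddAbove_inv_Cfun_image {a b : ℝ} (ha : 0 < a) (hb : b < 2) :
    BddAbove ((fun γ => (Cfun γ)⁻¹) '' Icc a b) := by
  have hsub : Icc a b ⊆ Iio 2 := fun γ hγ => hγ.2.trans_lt hb
  obtain ⟨M, hM⟩ := isCompact_Icc.bddAbove_image
    (((continuousOn_Gamma_two_sub.mono hsub).const_smul π).div_const 2)
  refine ⟨M, ?_⟩
  rintro _ ⟨γ, hγ, rfl⟩
  exact (inv_Cfun_le (ha.trans_le hγ.1) (hsub hγ)).trans (hM ⟨γ, hγ, rfl⟩)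

lemma abs_mul_rpow_le {θ y γ b : ℝ} (hγ0 : 0 ≤ γ) (hγb : γ ≤ b) :
    |θ * y| ^ γ ≤ (1 + |θ|) ^ b * |y| ^ γ := by
  rw [abs_mul, mul_rpow (abs_nonneg _) (abs_nonneg _)]
  gcongr
  calc |θ| ^ γ ≤ (1 + |θ|) ^ γ := by gcongr; linarith
    _ ≤ (1 + |θ|) ^ b := rpow_le_rpow_of_exponent_le (by linarith [abs_nonneg θ]) hγb

section Tf

variable {a b ξ : ℝ} {α f : ℝ → ℝ}

lemma integrable_Tf_integrand (ha : 0 < a) (hb : b < 2) (hαm : Measurable α)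
    (hα : ∀ x, α x ∈ Icc a b) (hfm : Measurable f) (hfi : Integrable fun x => |f x| ^ α x)
    (hξ : 1 ≤ ξ) : Integrable fun x => |ξ⁻¹ * f x| ^ α x * Cfun (α x) := by
  obtain ⟨K, hK⟩ := bddAbove_Cfun_image ha hb
  refine (hfi.mul_const K).mono'
    (((hfm.const_mul _).abs.pow hαm).mul (measurable_Cfun.comp hαm)).aestronglyMeasurable
    (Filter.Eventually.of_forall fun x => ?_)
  have hCx := Cfun_pos (ha.trans_le (hα x).1) ((hα x).2.trans_lt hb)
  have hshrink : |ξ⁻¹ * f x| ≤ |f x| := by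
    rw [abs_mul, abs_inv, abs_of_pos (by linarith)]
    exact mul_le_of_le_one_left (abs_nonneg _) (inv_le_one_of_one_le₀ hξ)
  rw [Real.norm_eq_abs, abs_of_nonneg (by positivity)]
  exact mul_le_mul (rpow_le_rpow (abs_nonneg _) hshrink (ha.le.trans (hα x).1))
    (hK ⟨α x, hα x, rfl⟩) hCx.le (by positivity)

lemma integral_rpow_le_Tf {S : ℝ} (hα0 : ∀ x, 0 ≤ α x) (hαb : ∀ x, α x ≤ b)
    (hC : ∀ x, 0 < Cfun (α x)) (hS : ∀ x, (Cfun (α x))⁻¹ ≤ S)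
    (hint : Integrable fun x => |ξ⁻¹ * f x| ^ α x * Cfun (α x)) (θ : ℝ) :
    ∫ x, |ξ⁻¹ * θ * f x| ^ α x ≤ (1 + |θ|) ^ b * S * Tf α f ξ := by
  rw [Tf, ← integral_const_mul]
  refine integral_mono_of_nonneg (Filter.Eventually.of_forall fun x => by positivity)
    (hint.const_mul _) (Filter.Eventually.of_forall fun x => ?_)
  have hCS : |ξ⁻¹ * f x| ^ α x ≤ S * (|ξ⁻¹ * f x| ^ α x * Cfun (α x)) := by
    calc |ξ⁻¹ * f x| ^ α x = (|ξ⁻¹ * f x| ^ α x * Cfun (α x)) * (Cfun (α x))⁻¹ := by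
          rw [mul_inv_cancel_right₀ (hC x).ne']
      _ ≤ (|ξ⁻¹ * f x| ^ α x * Cfun (α x)) * S := by
          have := (hC x).le
          gcongr
          exact hS x
      _ = S * (|ξ⁻¹ * f x| ^ α x * Cfun (α x)) := mul_comm _ _
  calc |ξ⁻¹ * θ * f x| ^ α x = |θ * (ξ⁻¹ * f x)| ^ α x := by ring_nf
    _ ≤ (1 + |θ|) ^ b * |ξ⁻¹ * f x| ^ α x := abs_mul_rpow_le (hα0 x) (hαb x)
    _ ≤ (1 + |θ|) ^ b * (S * (|ξ⁻¹ * f x| ^ α x * Cfun (α x))) := by gcongr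
    _ = _ := by ring

end Tf

lemma integral_abs_mul_abs_sub_one_add_exp_neg_le {φ u : ℝ → ℝ} {b K : ℝ}
    (hφ : Integrable fun θ => (1 + |θ|) ^ (2 * b) * |φ θ|) (hu0 : ∀ θ, 0 ≤ u θ)
    (hu : ∀ θ, u θ ≤ (1 + |θ|) ^ b * K) :
    ∫ θ, |φ θ| * |u θ - 1 + exp (-u θ)| ≤ (∫ θ, (1 + |θ|) ^ (2 * b) * |φ θ|) * K ^ 2 := by
  rw [← integral_mul_const]
  refine integral_mono_of_nonneg (Filter.Eventually.of_forall fun θ => by positivity)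
    (hφ.mul_const _) (Filter.Eventually.of_forall fun θ => ?_)
  have hsq : (1 + |θ|) ^ (2 * b) = ((1 + |θ|) ^ b) ^ 2 := by
    rw [mul_comm, rpow_mul (by positivity)]
    norm_cast
  calc |φ θ| * |u θ - 1 + exp (-u θ)| ≤ |φ θ| * ((1 + |θ|) ^ b * K) ^ 2 := by
        gcongr
        exact (abs_sub_one_add_exp_neg_le_sq (hu0 θ)).trans (pow_le_pow_left₀ (hu0 θ) (hu θ) 2)
    _ = (1 + |θ|) ^ (2 * b) * |φ θ| * K ^ 2 := by rw [hsq]; ring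

theorem rho_le_Tf_sq_general
    (a b : ℝ) (ha : 0 < a) (hb : b < 2)
    (α : ℝ → ℝ) (hαm : Measurable α) (hα : ∀ x, α x ∈ Set.Icc a b)
    (φ : ℝ → ℝ)
    (hφmom : Integrable (fun θ : ℝ => (1 + |θ|) ^ (2 * b) * |φ θ|))
    (f : ℝ → ℝ) (hfm : Measurable f) (hfi : Integrable (fun x => |f x| ^ α x))
    (ξ : ℝ) (hξ : 1 ≤ ξ) :
    rhoF α f φ ξ ≤
      (∫ θ : ℝ, (1 + |θ|) ^ (2 * b) * |φ θ|) *
        (sSup ((fun γ => (Cfun γ)⁻¹) '' Set.Icc a b)) ^ 2 * (Tf α f ξ) ^ 2 := by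
  set S := sSup ((fun γ => (Cfun γ)⁻¹) '' Icc a b)
  have hC : ∀ x, 0 < Cfun (α x) := fun x => Cfun_pos (ha.trans_le (hα x).1) ((hα x).2.trans_lt hb)
  have hS : ∀ x, (Cfun (α x))⁻¹ ≤ S := fun x =>
    le_csSup (bddAbove_inv_Cfun_image ha hb) (mem_image_of_mem _ (hα x))
  have hbound := integral_rpow_le_Tf (fun x => ha.le.trans (hα x).1) (fun x => (hα x).2) hC hS
    (integrable_Tf_integrand ha hb hαm hα hfm hfi hξ)
  calc rhoF α f φ ξ ≤ (∫ θ, (1 + |θ|) ^ (2 * b) * |φ θ|) * (S * Tf α f ξ) ^ 2 :=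
        integral_abs_mul_abs_sub_one_add_exp_neg_le hφmom
          (fun θ => integral_nonneg fun x => by positivity)
          fun θ => (hbound θ).trans_eq (mul_assoc _ _ _)
    _ = _ := by ring

/-- with c₁ = ∫ (1+|θ|)^{2b} |φ(θ)| dθ and c₂ = max_{γ∈[a,b]} C(γ)⁻¹, one has
ρ_f(ξ) ≤ c₁ c₂² (T_f(ξ))² for every f ∈ F_α and ξ ≥ 1. -/
theorem rho_le_Tf_sq
    (a b : ℝ) (ha : 0 < a) (hab : a < b) (hb : b < 2)
    (α : ℝ → ℝ) (hαm : Measurable α) (hα : ∀ x, α x ∈ Set.Icc a b)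
    (φ : ℝ → ℝ) (hφm : Measurable φ)
    (hφmom : Integrable (fun θ : ℝ => (1 + |θ|) ^ (2 * b) * |φ θ|))
    (f : ℝ → ℝ) (hfm : Measurable f) (hfi : Integrable (fun x => |f x| ^ α x))
    (ξ : ℝ) (hξ : 1 ≤ ξ) :
    rhoF α f φ ξ ≤
      (∫ θ : ℝ, (1 + |θ|) ^ (2 * b) * |φ θ|) *
        (sSup ((fun γ => (Cfun γ)⁻¹) '' Set.Icc a b)) ^ 2 * (Tf α f ξ) ^ 2 :=
  rho_le_Tf_sq_general a b ha hb α hαm hα φ hφmom f hfm hfi ξ hξ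
end
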